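/- Let G be a Monge DAG on {s,...,N} and n ∈ {s+1,...,N}. Let d_min(n) and d_max(n) be the least and greatest number of links over all shortest s-n paths. Then for every m with d_min(n) ≤ m ≤ d_max(n), there exists a shortest s-n path with exactly m links; i.e., the set of link counts of shortest s-n paths is the full integer interval [d_min(n), d_max(n)]. -/

import Mathlib

/-- A Monge (submodular) edge-length function on the complete DAG on `{s,...,N}`. -/
def IsMonge (s N : ℕ) (c : ℕ → ℕ → ℝ) : Prop :=
  ∀ i₁ i₂ j₂ j₁ : ℕ, s ≤ i₁ → i₁ < i₂ → i₂ < j₂ → j₂ < j₁ → j₁ ≤ N →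
    c i₁ j₂ + c i₂ j₁ ≤ c i₁ j₁ + c i₂ j₂

/-- `v 0, v 1, ..., v m` is an `m`-link path from `a` to `b` inside `{s,...,N}`. -/
def IsPath (s N a b m : ℕ) (v : ℕ → ℕ) : Prop :=
  v 0 = a ∧ v m = b ∧ (∀ k < m, v k < v (k + 1)) ∧ s ≤ a ∧ b ≤ N

/-- The length of the `m`-link path `v 0, ..., v m` under edge lengths `c`. -/
def pathLen (c : ℕ → ℕ → ℝ) (m : ℕ) (v : ℕ → ℕ) : ℝ :=
  ∑ k ∈ Finset.range m, c (v k) (v (k + 1))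

/-- The set of lengths of `m`-link `a`-`b` paths in the complete DAG on `{s,...,N}`. -/
def pathLens (s N a b m : ℕ) (c : ℕ → ℕ → ℝ) : Set ℝ :=
  {x | ∃ v, IsPath s N a b m v ∧ pathLen c m v = x}

/-- The set of link counts of shortest `s`-`n` paths in `G(lam)`
    (the graph with `lam` subtracted from every edge length). -/
def DSet (s N n : ℕ) (c : ℕ → ℕ → ℝ) (lam : ℝ) : Set ℕ :=
  {m | ∃ v, IsPath s N s n m v ∧
    ∀ m' w, IsPath s N s n m' w →
      pathLen c m v - m * lam ≤ pathLen c m' w - m' * lam}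

/-- The set of lengths of all `s`-`n` paths (any number of links). -/
def allLens (s N n : ℕ) (c : ℕ → ℕ → ℝ) : Set ℝ :=
  {x | ∃ m v, IsPath s N s n m v ∧ pathLen c m v = x}

/-!
Given shortest `s`-`n` paths `u` with `p` links and `w` with `q ≥ p + 2` links, there is an
index `i` where `u` and `w` (shifted by one link) cross: `u i ≤ w (i + 1) < w (i + 2) < u (i + 1)`.
Exchanging the tails of the two paths at the crossing yields paths with `q - 1` and `p + 1` links
whose total length is, by the Monge inequality, at most that of `u` and `w`. Since neither can be
shorter than a shortest path, the one with `p + 1` links is itself shortest. The total number of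
links is preserved, so the argument is unchanged after subtracting a constant `lam` from every
edge length.
-/

lemma IsMonge.exchange {s N : ℕ} {c : ℕ → ℕ → ℝ} (hc : IsMonge s N c) {i₁ i₂ j₂ j₁ : ℕ}
    (hs : s ≤ i₁) (hi : i₁ ≤ i₂) (hij : i₂ < j₂) (hj : j₂ < j₁) (hN : j₁ ≤ N) :
    c i₁ j₂ + c i₂ j₁ ≤ c i₁ j₁ + c i₂ j₂ := by
  rcases hi.eq_or_lt with rfl | hi
  · rw [add_comm]
  · exact hc i₁ i₂ j₂ j₁ hs hi hij hj hN

section Paths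

variable {s N a b m : ℕ} {v : ℕ → ℕ}

lemma IsPath.lt (h : IsPath s N a b m v) {k l : ℕ} (hkl : k < l) (hl : l ≤ m) : v k < v l :=
  strictMonoOn_Iic_of_lt_succ h.2.2.1 (hkl.le.trans hl) hl hkl

lemma IsPath.le (h : IsPath s N a b m v) {k l : ℕ} (hkl : k ≤ l) (hl : l ≤ m) :
    v k ≤ v l := by
  rcases hkl.eq_or_lt with rfl | hkl
  · exact le_rfl
  · exact (h.lt hkl hl).le

lemma IsPath.mem_Icc (h : IsPath s N a b m v) {k : ℕ} (hk : k ≤ m) : v k ∈ Set.Icc s N :=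
  ⟨h.2.2.2.1.trans (h.1 ▸ h.le k.zero_le hk),
    (h.le hk le_rfl).trans (h.2.1 ▸ h.2.2.2.2)⟩

end Paths

/-- Follow `u` up to index `i`, then jump to `w (j + 1)` and follow `w` from there. -/
def splice (u : ℕ → ℕ) (i : ℕ) (w : ℕ → ℕ) (j : ℕ) (k : ℕ) : ℕ :=
  if k ≤ i then u k else w (k - i + j)

lemma isPath_splice {s N a b₁ a₂ b p q i j : ℕ} {u w : ℕ → ℕ}
    (hu : IsPath s N a b₁ p u) (hw : IsPath s N a₂ b q w) (hi : i ≤ p) (hj : j < q)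
    (hjump : u i < w (j + 1)) : IsPath s N a b (i + (q - j)) (splice u i w j) := by
  refine ⟨by simp [splice, hu.1], ?_, fun k hk => ?_, hu.2.2.2.1, hw.2.2.2.2⟩
  · simp only [splice, if_neg (show ¬ i + (q - j) ≤ i by omega)]
    rw [show i + (q - j) - i + j = q by omega, hw.2.1]
  · unfold splice
    rcases lt_trichotomy k i with hki | rfl | hki
    · rw [if_pos hki.le, if_pos (show k + 1 ≤ i by omega)]
      exact hu.lt k.lt_add_one (by omega)
    · rw [if_pos le_rfl, if_neg (by omega), show k + 1 - k + j = j + 1 by omega]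
      exact hjump
    · rw [if_neg (by omega), if_neg (by omega)]
      exact hw.lt (by omega) (by omega)

section Length

variable {c : ℕ → ℕ → ℝ}

lemma pathLen_congr {m : ℕ} {v v' : ℕ → ℕ} (h : ∀ k ≤ m, v k = v' k) :
    pathLen c m v = pathLen c m v' :=
  Finset.sum_congr rfl fun k hk => by
    rw [Finset.mem_range] at hk
    rw [h k hk.le, h (k + 1) hk]

lemma pathLen_add_one_add (v : ℕ → ℕ) (i r : ℕ) :
    pathLen c (i + 1 + r) v =
      pathLen c i v + c (v i) (v (i + 1)) + pathLen c r (fun t => v (i + 1 + t)) := by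
  simp only [pathLen, Finset.sum_range_add, Finset.sum_range_one, add_zero, add_assoc]

lemma pathLen_splice (u w : ℕ → ℕ) (i j r : ℕ) :
    pathLen c (i + 1 + r) (splice u i w j) =
      pathLen c i u + c (u i) (w (j + 1)) + pathLen c r (fun t => w (j + 1 + t)) := by
  rw [pathLen_add_one_add]
  congr 2
  · exact pathLen_congr fun k hk => if_pos hk
  · rw [splice, if_pos le_rfl, splice, if_neg (by omega), show i + 1 - i + j = j + 1 by omega]
  · funext t
    rw [splice, if_neg (by omega), show i + 1 + t - i + j = j + 1 + t by omega]

end Length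

lemma IsPath.exists_crossing {s N a b p q : ℕ} {u w : ℕ → ℕ}
    (hu : IsPath s N a b p u) (hw : IsPath s N a b q w) (hpq : p + 2 ≤ q) :
    ∃ i < p, u i ≤ w (i + 1) ∧ w (i + 2) < u (i + 1) := by
  have hex_p : w (p + 1) < u p := by
    rw [hu.2.1, ← hw.2.1]
    exact hw.lt (by omega) le_rfl
  have hex : ∃ k, w (k + 1) < u k := ⟨p, hex_p⟩
  have hstart : u 0 ≤ w 1 := by
    rw [hu.1, ← hw.1]
    exact hw.le zero_le_one (by omega)
  have hfind_pos : Nat.find hex ≠ 0 := fun h0 => (Nat.find_spec hex).not_ge (h0 ▸ hstart)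
  obtain ⟨i, hi⟩ := Nat.exists_eq_add_one_of_ne_zero hfind_pos
  have hip : i < p := by
    have := Nat.find_min' hex hex_p
    omega
  refine ⟨i, hip, not_lt.mp (Nat.find_min hex (by omega)), ?_⟩
  simpa [hi] using Nat.find_spec hex

lemma IsMonge.exists_exchange {s N a b p q : ℕ} {c : ℕ → ℕ → ℝ} (hc : IsMonge s N c)
    {u w : ℕ → ℕ} (hu : IsPath s N a b p u) (hw : IsPath s N a b q w) (hpq : p + 2 ≤ q) :
    ∃ v₁ v₂, IsPath s N a b (q - 1) v₁ ∧ IsPath s N a b (p + 1) v₂ ∧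
      pathLen c (q - 1) v₁ + pathLen c (p + 1) v₂ ≤ pathLen c p u + pathLen c q w := by
  obtain ⟨i, hip, hcross₁, hcross₂⟩ := hu.exists_crossing hw hpq
  have hw_step : w (i + 1) < w (i + 2) := hw.lt (by omega) (by omega)
  refine ⟨splice u i w (i + 1), splice w (i + 1) u i, ?_, ?_, ?_⟩
  · simpa [show i + (q - (i + 1)) = q - 1 by omega] using
      isPath_splice hu hw hip.le (by omega) (hcross₁.trans_lt hw_step)
  · simpa [show i + 1 + (p - i) = p + 1 by omega] using
      isPath_splice hw hu (by omega) hip (hw_step.trans hcross₂)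
  · have hmonge := hc.exchange (hu.mem_Icc (by omega)).1 hcross₁ hw_step hcross₂
      (hu.mem_Icc (by omega)).2
    have hu_len : pathLen c p u = pathLen c i u + c (u i) (u (i + 1)) +
        pathLen c (p - (i + 1)) (fun t => u (i + 1 + t)) := by
      conv_lhs => rw [show p = i + 1 + (p - (i + 1)) by omega, pathLen_add_one_add]
    have hw_len : pathLen c q w = pathLen c (i + 1) w + c (w (i + 1)) (w (i + 2)) +
        pathLen c (q - (i + 2)) (fun t => w (i + 2 + t)) := by
      conv_lhs => rw [show q = i + 1 + 1 + (q - (i + 2)) by omega, pathLen_add_one_add]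
    rw [hu_len, hw_len, show q - 1 = i + 1 + (q - (i + 2)) by omega,
      show p + 1 = i + 1 + 1 + (p - (i + 1)) by omega, pathLen_splice, pathLen_splice]
    linarith

lemma add_one_mem_DSet {s N n p q : ℕ} {c : ℕ → ℕ → ℝ} (hc : IsMonge s N c) {lam : ℝ}
    (hp : p ∈ DSet s N n c lam) (hq : q ∈ DSet s N n c lam) (hpq : p + 2 ≤ q) :
    p + 1 ∈ DSet s N n c lam := by
  obtain ⟨u, hu, hu_min⟩ := hp
  obtain ⟨w, hw, hw_min⟩ := hq
  obtain ⟨v₁, v₂, hv₁, hv₂, hlen⟩ := hc.exists_exchange hu hw hpq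
  refine ⟨v₂, hv₂, fun m' w' hw' => ?_⟩
  have h₁ := hu_min _ _ hv₁
  have h₂ := hw_min _ _ hw'
  push_cast [show 1 ≤ q by omega] at h₁ ⊢
  linarith

theorem IsMonge.ordConnected_DSet {s N n : ℕ} {c : ℕ → ℕ → ℝ} (hc : IsMonge s N c) (lam : ℝ) :
    (DSet s N n c lam).OrdConnected := by
  refine ⟨fun p hp q hq => ?_⟩
  rintro m ⟨hpm, hmq⟩
  induction m, hpm using Nat.le_induction with
  | base => exact hp
  | succ m hpm ih =>
    rcases (show m + 1 = q ∨ m + 2 ≤ q by omega) with rfl | hmq'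
    · exact hq
    · exact add_one_mem_DSet hc (ih (by omega)) hq hmq'

theorem stmt4_general (s N n : ℕ) (c : ℕ → ℕ → ℝ) (hc : IsMonge s N c)
    (dmin dmax : ℕ)
    (h1 : IsLeast (DSet s N n c 0) dmin) (h2 : IsGreatest (DSet s N n c 0) dmax) :
    ∀ m, dmin ≤ m → m ≤ dmax → m ∈ DSet s N n c 0 :=
  fun _ hm1 hm2 => (hc.ordConnected_DSet 0).out h1.1 h2.1 ⟨hm1, hm2⟩

/-- The set of link counts of shortest `s`-`n` paths is a full integer interval. -/
theorem stmt4 (s N n : ℕ) (c : ℕ → ℕ → ℝ) (hc : IsMonge s N c)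
    (hn1 : s + 1 ≤ n) (hn2 : n ≤ N) (dmin dmax : ℕ)
    (h1 : IsLeast (DSet s N n c 0) dmin) (h2 : IsGreatest (DSet s N n c 0) dmax) :
    ∀ m, dmin ≤ m → m ≤ dmax → m ∈ DSet s N n c 0 :=
  stmt4_general s N n c hc dmin dmax h1 h2
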